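/- Let u₀ and v₀ be twice differentiable real solutions of −y'' + V y = 0 on an interval with Wronskian u₀ v₀' − u₀' v₀ ≡ 1, and set R = √(u₀² + v₀²). Then R satisfies R'' = V·R + R⁻³, i.e., V = R''/R − 1/R⁴, on that interval. -/

import Mathlib

/-!
Differentiating `R = √(u² + v²)` twice gives
`R'' = (u u'' + v v'') / R + ((u² + v²)(u'² + v'²) - (u u' + v v')²) / R³`,
and by Lagrange's identity the last numerator is the squared Wronskian `(u v' - u' v)²`.
For solutions of `y'' = V y` with Wronskian `1` this is `R'' = V R + R⁻³`.
-/

open Real Set Filter Topology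

section SqrtSqAddSq

variable {u v : ℝ → ℝ} {x : ℝ}

lemma hasDerivAt_sqrt_sq_add_sq (hu : DifferentiableAt ℝ u x) (hv : DifferentiableAt ℝ v x)
    (h : u x ^ 2 + v x ^ 2 ≠ 0) :
    HasDerivAt (fun t => √(u t ^ 2 + v t ^ 2))
      ((u x * deriv u x + v x * deriv v x) / √(u x ^ 2 + v x ^ 2)) x := by
  have hsq : HasDerivAt (fun t => u t ^ 2 + v t ^ 2)
      (2 * (u x * deriv u x + v x * deriv v x)) x :=
    ((hu.hasDerivAt.fun_pow 2).fun_add (hv.hasDerivAt.fun_pow 2)).congr_deriv (by ring)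
  exact (hsq.sqrt h).congr_deriv (by field_simp)

lemma deriv_sqrt_sq_add_sq_eventuallyEq (hu : ∀ᶠ t in 𝓝 x, DifferentiableAt ℝ u t)
    (hv : ∀ᶠ t in 𝓝 x, DifferentiableAt ℝ v t) (h : u x ^ 2 + v x ^ 2 ≠ 0) :
    deriv (fun t => √(u t ^ 2 + v t ^ 2)) =ᶠ[𝓝 x]
      fun t => (u t * deriv u t + v t * deriv v t) / √(u t ^ 2 + v t ^ 2) := by
  have hcont : ContinuousAt (fun t => u t ^ 2 + v t ^ 2) x :=
    (hu.self_of_nhds.continuousAt.pow 2).add (hv.self_of_nhds.continuousAt.pow 2)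
  filter_upwards [hu, hv, hcont.eventually_ne h] with t hut hvt ht
  exact (hasDerivAt_sqrt_sq_add_sq hut hvt ht).deriv

lemma deriv_deriv_sqrt_sq_add_sq (hu : ∀ᶠ t in 𝓝 x, DifferentiableAt ℝ u t)
    (hv : ∀ᶠ t in 𝓝 x, DifferentiableAt ℝ v t) (hu' : DifferentiableAt ℝ (deriv u) x)
    (hv' : DifferentiableAt ℝ (deriv v) x) (h : 0 < u x ^ 2 + v x ^ 2) :
    deriv (deriv fun t => √(u t ^ 2 + v t ^ 2)) x =
      (u x * deriv (deriv u) x + v x * deriv (deriv v) x) / √(u x ^ 2 + v x ^ 2) +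
        (u x * deriv v x - deriv u x * v x) ^ 2 / √(u x ^ 2 + v x ^ 2) ^ 3 := by
  have hnum : HasDerivAt (fun t => u t * deriv u t + v t * deriv v t)
      (deriv u x * deriv u x + u x * deriv (deriv u) x +
        (deriv v x * deriv v x + v x * deriv (deriv v) x)) x :=
    (hu.self_of_nhds.hasDerivAt.mul hu'.hasDerivAt).add
      (hv.self_of_nhds.hasDerivAt.mul hv'.hasDerivAt)
  have hden := hasDerivAt_sqrt_sq_add_sq hu.self_of_nhds hv.self_of_nhds h.ne'
  have hR : √(u x ^ 2 + v x ^ 2) ≠ 0 := (sqrt_pos.2 h).ne'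
  have hR2 : √(u x ^ 2 + v x ^ 2) ^ 2 = u x ^ 2 + v x ^ 2 := sq_sqrt h.le
  rw [(deriv_sqrt_sq_add_sq_eventuallyEq hu hv h.ne').deriv_eq, (hnum.fun_div hden hR).deriv]
  field_simp
  linear_combination (deriv u x ^ 2 + deriv v x ^ 2) * hR2

end SqrtSqAddSq

theorem R_second_derivative_general (a b : ℝ) (V u₀ v₀ : ℝ → ℝ)
    (hu : Differentiable ℝ u₀) (hu' : Differentiable ℝ (deriv u₀))
    (hv : Differentiable ℝ v₀) (hv' : Differentiable ℝ (deriv v₀))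
    (hequ : ∀ x ∈ Ioo a b, deriv (deriv u₀) x = V x * u₀ x)
    (heqv : ∀ x ∈ Ioo a b, deriv (deriv v₀) x = V x * v₀ x)
    (hW : ∀ x ∈ Ioo a b, u₀ x * deriv v₀ x - deriv u₀ x * v₀ x = 1)
    (hpos : ∀ x ∈ Ioo a b, 0 < u₀ x ^ 2 + v₀ x ^ 2) :
    ∀ x ∈ Ioo a b,
      deriv (deriv (fun t => Real.sqrt (u₀ t ^ 2 + v₀ t ^ 2))) x =
        V x * Real.sqrt (u₀ x ^ 2 + v₀ x ^ 2) + (Real.sqrt (u₀ x ^ 2 + v₀ x ^ 2))⁻¹ ^ 3 := by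
  intro x hx
  rw [deriv_deriv_sqrt_sq_add_sq (.of_forall hu) (.of_forall hv) (hu' x) (hv' x) (hpos x hx),
    hequ x hx, heqv x hx, hW x hx]
  have hR : √(u₀ x ^ 2 + v₀ x ^ 2) ≠ 0 := (sqrt_pos.2 (hpos x hx)).ne'
  have hVR : u₀ x * (V x * u₀ x) + v₀ x * (V x * v₀ x) = V x * √(u₀ x ^ 2 + v₀ x ^ 2) ^ 2 := by
    rw [sq_sqrt (hpos x hx).le]
    ring
  rw [hVR]
  field_simp

theorem R_second_derivative (a b : ℝ) (V u₀ v₀ : ℝ → ℝ)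
    (hV : ContinuousOn V (Ioo a b))
    (hu : Differentiable ℝ u₀) (hu' : Differentiable ℝ (deriv u₀))
    (hv : Differentiable ℝ v₀) (hv' : Differentiable ℝ (deriv v₀))
    (hequ : ∀ x ∈ Ioo a b, deriv (deriv u₀) x = V x * u₀ x)
    (heqv : ∀ x ∈ Ioo a b, deriv (deriv v₀) x = V x * v₀ x)
    (hW : ∀ x ∈ Ioo a b, u₀ x * deriv v₀ x - deriv u₀ x * v₀ x = 1)
    (hpos : ∀ x ∈ Ioo a b, 0 < u₀ x ^ 2 + v₀ x ^ 2) :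
    ∀ x ∈ Ioo a b,
      deriv (deriv (fun t => Real.sqrt (u₀ t ^ 2 + v₀ t ^ 2))) x =
        V x * Real.sqrt (u₀ x ^ 2 + v₀ x ^ 2) + (Real.sqrt (u₀ x ^ 2 + v₀ x ^ 2))⁻¹ ^ 3 :=
  R_second_derivative_general a b V u₀ v₀ hu hu' hv hv' hequ heqv hW hpos
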